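/- arXiv:2507.08120 — 4 statements merged into one kernel-verified Lean document; each statement's English description precedes it below -/
import Mathlib

section
/- Let q = 1/p for a prime p, let f : ℝ → ℂ be a continuous function and b a real number. Then the Jackson integral (1 - p⁻¹) · b · ∑_{k=0}^∞ p^{-k} f(p^{-k} b) equals b times the integral over the p-adic integers ℤ_p of the function y ↦ f(b · |y|_p) with respect to the normalized Haar measure on ℤ_p, provided the series converges absolutely. -/
/-!
The spheres `‖y‖ = p⁻ᵏ`, `k ∈ ℕ`, partition `ℤ_[p] \ {0}`, and the closed ball `‖y‖ ≤ p⁻ᵏ` is the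
ideal `(pᵏ)`, an additive subgroup of index `pᵏ`, so by translation invariance it has measure `p⁻ᵏ`.
Hence the sphere of radius `p⁻ᵏ` has measure `p⁻ᵏ (1 - p⁻¹)`, `{0}` is null, and the integral of
the radial function `y ↦ f (b ‖y‖)` is the sum over the spheres, which is the Jackson sum.
-/

open MeasureTheory Metric

namespace PadicInt

variable {p : ℕ} [Fact p.Prime]

lemma closedBall_zero_pow_eq_span (k : ℕ) :
    closedBall (0 : ℤ_[p]) ((p : ℝ) ^ (-(k : ℤ))) = Ideal.span {(p : ℤ_[p]) ^ k} := by
  ext y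
  rw [mem_closedBall_zero_iff, norm_le_pow_iff_mem_span_pow]
  rfl

lemma index_span_pow (k : ℕ) :
    (Ideal.span {(p : ℤ_[p]) ^ k}).toAddSubgroup.index = p ^ k := by
  change Nat.card (ℤ_[p] ⧸ Ideal.span {(p : ℤ_[p]) ^ k}) = p ^ k
  rw [← ker_toZModPow, Nat.card_congr
    (RingHom.quotientKerEquivOfSurjective (ZMod.ringHom_surjective _)).toEquiv, Nat.card_zmod]

lemma sphere_zero_pow_eq_closedBall_diff (k : ℕ) :
    sphere (0 : ℤ_[p]) ((p : ℝ) ^ (-(k : ℤ))) =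
      closedBall 0 ((p : ℝ) ^ (-(k : ℤ))) \ closedBall 0 ((p : ℝ) ^ (-((k + 1 : ℕ) : ℤ))) := by
  ext y
  have hlt : ‖y‖ ≤ (p : ℝ) ^ (-((k + 1 : ℕ) : ℤ)) ↔ ‖y‖ < (p : ℝ) ^ (-(k : ℤ)) := by
    rw [norm_le_pow_iff_norm_lt_pow_add_one]
    push_cast
    ring_nf
  simp only [mem_sphere_zero_iff_norm, Set.mem_sdiff, mem_closedBall_zero_iff, hlt, not_lt]
  exact ⟨fun h => ⟨h.le, h.ge⟩, fun h => le_antisymm h.1 h.2⟩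

lemma iUnion_sphere_zero_pow :
    ⋃ k : ℕ, sphere (0 : ℤ_[p]) ((p : ℝ) ^ (-(k : ℤ))) = {0}ᶜ := by
  ext y
  refine ⟨fun hy hy0 => ?_, fun hy0 => Set.mem_iUnion.2 ⟨y.valuation, ?_⟩⟩
  · obtain ⟨k, hk⟩ := Set.mem_iUnion.1 hy
    simp only [Set.mem_singleton_iff.1 hy0, mem_sphere_zero_iff_norm, norm_zero] at hk
    exact (zpow_pos (by exact_mod_cast (Fact.out : p.Prime).pos) _).ne' hk.symm
  · simp [norm_eq_zpow_neg_valuation hy0]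

lemma pairwise_disjoint_sphere_zero_pow :
    Pairwise (Function.onFun Disjoint fun k : ℕ => sphere (0 : ℤ_[p]) ((p : ℝ) ^ (-(k : ℤ)))) :=
  fun k l hkl => Set.disjoint_left.2 fun y hk hl => hkl <| by
    have := zpow_right_injective₀ (by exact_mod_cast (Fact.out : p.Prime).pos)
      (by exact_mod_cast (Fact.out : p.Prime).ne_one) ((mem_sphere_zero_iff_norm.1 hk).symm.trans (mem_sphere_zero_iff_norm.1 hl))
    omega

variable [MeasurableSpace ℤ_[p]] [BorelSpace ℤ_[p]]
  (μ : Measure ℤ_[p]) [μ.IsAddLeftInvariant] [IsProbabilityMeasure μ]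

lemma measure_closedBall_zero_pow (k : ℕ) :
    μ (closedBall 0 ((p : ℝ) ^ (-(k : ℤ)))) = ((p : ENNReal) ^ k)⁻¹ := by
  set H := (Ideal.span {(p : ℤ_[p]) ^ k}).toAddSubgroup
  have hindex : H.index = p ^ k := index_span_pow k
  have : H.FiniteIndex := ⟨by rw [hindex]; exact pow_ne_zero _ (Fact.out : p.Prime).ne_zero⟩
  have hH : (H : Set ℤ_[p]) = closedBall 0 ((p : ℝ) ^ (-(k : ℤ))) :=
    (closedBall_zero_pow_eq_span k).symm
  have hmeas : MeasurableSet (H : Set ℤ_[p]) := hH ▸ isClosed_closedBall.measurableSet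
  have := H.index_mul_measure hmeas μ
  rw [hindex, measure_univ, hH] at this
  exact ENNReal.eq_inv_of_mul_eq_one_left (by rw [mul_comm]; exact_mod_cast this)

lemma measureReal_closedBall_zero_pow (k : ℕ) :
    μ.real (closedBall 0 ((p : ℝ) ^ (-(k : ℤ)))) = (p : ℝ) ^ (-(k : ℤ)) := by
  rw [measureReal_def, measure_closedBall_zero_pow, ENNReal.toReal_inv, ENNReal.toReal_pow,
    ENNReal.toReal_natCast, zpow_neg, zpow_natCast]

lemma measureReal_sphere_zero_pow (k : ℕ) :
    μ.real (sphere 0 ((p : ℝ) ^ (-(k : ℤ)))) = (p : ℝ) ^ (-(k : ℤ)) * (1 - (p : ℝ)⁻¹) := by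
  have hsub : closedBall (0 : ℤ_[p]) ((p : ℝ) ^ (-((k + 1 : ℕ) : ℤ))) ⊆
      closedBall 0 ((p : ℝ) ^ (-(k : ℤ))) :=
    closedBall_subset_closedBall <| zpow_le_zpow_right₀
      (by exact_mod_cast (Fact.out : p.Prime).one_lt.le) (by omega)
  rw [sphere_zero_pow_eq_closedBall_diff, measureReal_sdiff hsub isClosed_closedBall.measurableSet,
    measureReal_closedBall_zero_pow, measureReal_closedBall_zero_pow]
  push_cast
  rw [neg_add, zpow_add₀ (by exact_mod_cast (Fact.out : p.Prime).ne_zero), zpow_neg_one]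
  ring

lemma measure_singleton_zero : μ {0} = 0 := by
  have hle (k : ℕ) : μ {0} ≤ (p : ENNReal)⁻¹ ^ k := by
    rw [← ENNReal.inv_pow, ← measure_closedBall_zero_pow μ k]
    exact measure_mono (by simp)
  have htends : Filter.Tendsto (fun k : ℕ => (p : ENNReal)⁻¹ ^ k) Filter.atTop (nhds 0) :=
    ENNReal.tendsto_pow_atTop_nhds_zero_of_lt_one <| ENNReal.inv_lt_one.2 <| by
      exact_mod_cast (Fact.out : p.Prime).one_lt
  exact le_antisymm (ge_of_tendsto' htends hle) bot_le

theorem hasSum_integral_comp_norm {E : Type*} [NormedAddCommGroup E] [NormedSpace ℝ E]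
    [CompleteSpace E] {φ : ℝ → E} (hφ : Integrable (fun y : ℤ_[p] => φ ‖y‖) μ) :
    HasSum (fun k : ℕ => ((p : ℝ) ^ (-(k : ℤ)) * (1 - (p : ℝ)⁻¹)) • φ ((p : ℝ) ^ (-(k : ℤ))))
      (∫ y, φ ‖y‖ ∂μ) := by
  have hsphere (k : ℕ) : ∫ y in sphere 0 ((p : ℝ) ^ (-(k : ℤ))), φ ‖y‖ ∂μ =
      ((p : ℝ) ^ (-(k : ℤ)) * (1 - (p : ℝ)⁻¹)) • φ ((p : ℝ) ^ (-(k : ℤ))) := by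
    rw [setIntegral_congr_fun isClosed_sphere.measurableSet
      (fun y hy => by rw [mem_sphere_zero_iff_norm.1 hy]), setIntegral_const,
      measureReal_sphere_zero_pow]
  have hae : (⋃ k : ℕ, sphere (0 : ℤ_[p]) ((p : ℝ) ^ (-(k : ℤ)))) =ᵐ[μ] Set.univ := by
    rw [iUnion_sphere_zero_pow, ae_eq_univ, compl_compl, measure_singleton_zero]
  have := hasSum_integral_iUnion (fun k => isClosed_sphere.measurableSet)
    pairwise_disjoint_sphere_zero_pow hφ.integrableOn
  rwa [setIntegral_congr_set hae, setIntegral_univ, funext hsphere] at this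

end PadicInt

theorem stmt_0_general (p : ℕ) [Fact p.Prime] (f : ℝ → ℂ) (hf : Continuous f) (b : ℝ)
    [MeasurableSpace ℤ_[p]] [BorelSpace ℤ_[p]]
    (μ : Measure ℤ_[p]) [μ.IsAddHaarMeasure] [IsProbabilityMeasure μ] :
    (1 - (p : ℂ)⁻¹) * (b : ℂ) * ∑' k : ℕ, (p : ℂ) ^ (-(k : ℤ)) * f ((p : ℝ) ^ (-(k : ℤ)) * b)
      = (b : ℂ) * ∫ y : ℤ_[p], f (b * ‖y‖) ∂μ := by
  have hint : Integrable (fun y : ℤ_[p] => f (b * ‖y‖)) μ :=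
    (hf.comp (continuous_const.mul continuous_norm)).integrable_of_hasCompactSupport
      (.of_compactSpace _)
  rw [← (PadicInt.hasSum_integral_comp_norm (φ := fun t => f (b * t)) μ hint).tsum_eq,
    mul_comm _ (b : ℂ), mul_assoc, ← tsum_mul_left]
  congr 1
  refine tsum_congr fun k => ?_
  rw [Complex.real_smul, mul_comm b]
  push_cast
  ring

theorem stmt_0 (p : ℕ) [Fact p.Prime] (f : ℝ → ℂ) (hf : Continuous f) (b : ℝ)
    [MeasurableSpace ℤ_[p]] [BorelSpace ℤ_[p]]
    (μ : Measure ℤ_[p]) [μ.IsAddHaarMeasure] [IsProbabilityMeasure μ]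
    (hsum : Summable fun k : ℕ => (p : ℝ) ^ (-(k : ℤ)) * ‖f ((p : ℝ) ^ (-(k : ℤ)) * b)‖) :
    (1 - (p : ℂ)⁻¹) * (b : ℂ) * ∑' k : ℕ, (p : ℂ) ^ (-(k : ℤ)) * f ((p : ℝ) ^ (-(k : ℤ)) * b)
      = (b : ℂ) * ∫ y : ℤ_[p], f (b * ‖y‖) ∂μ :=
  stmt_0_general p f hf b μ
end

section
/- For real numbers a and b, the integral ∫_ℝ |x|^a |1-x|^b dx is finite if and only if a > -1, b > -1 and a + b < -1. -/
open MeasureTheory Set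

private lemma rpow_bounds' {u v t p : ℝ} (hu : 0 < u) (hut : u ≤ t) (htv : t ≤ v) :
    min (u ^ p) (v ^ p) ≤ t ^ p ∧ t ^ p ≤ max (u ^ p) (v ^ p) := by
  rcases le_or_gt 0 p with hp | hp
  · exact ⟨(min_le_left _ _).trans (Real.rpow_le_rpow hu.le hut hp),
      (Real.rpow_le_rpow (hu.le.trans hut) htv hp).trans (le_max_right _ _)⟩
  · exact ⟨(min_le_right _ _).trans (Real.rpow_le_rpow_of_nonpos (hu.trans_le hut) htv hp.le),
      (Real.rpow_le_rpow_of_nonpos hu hut hp.le).trans (le_max_left _ _)⟩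

private lemma integrableOn_iff_of_bounds {f g : ℝ → ℝ} {s : Set ℝ} (hs : MeasurableSet s)
    (hf : AEStronglyMeasurable f (volume.restrict s))
    (hg : AEStronglyMeasurable g (volume.restrict s))
    {c C : ℝ} (hc : 0 < c)
    (hg0 : ∀ x ∈ s, 0 ≤ g x)
    (h1 : ∀ x ∈ s, c * g x ≤ f x) (h2 : ∀ x ∈ s, f x ≤ C * g x) :
    IntegrableOn f s ↔ IntegrableOn g s := by
  constructor
  · intro hF
    have h' : Integrable (fun x => (1 / c) * f x) (volume.restrict s) := hF.const_mul _
    refine h'.mono' hg ?_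
    refine (ae_restrict_iff' hs).2 (Filter.Eventually.of_forall fun x hx => ?_)
    rw [Real.norm_eq_abs, abs_of_nonneg (hg0 x hx), one_div, inv_mul_eq_div, le_div_iff₀ hc,
      mul_comm]
    exact h1 x hx
  · intro hG
    have h' : Integrable (fun x => C * g x) (volume.restrict s) := hG.const_mul _
    refine h'.mono' hf ?_
    refine (ae_restrict_iff' hs).2 (Filter.Eventually.of_forall fun x hx => ?_)
    have hf0 : 0 ≤ f x := le_trans (mul_nonneg hc.le (hg0 x hx)) (h1 x hx)
    rw [Real.norm_eq_abs, abs_of_nonneg hf0]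
    exact h2 x hx

/-- bounded factor times `x ^ p` -/
private lemma aux_bdd {s : Set ℝ} (hs : MeasurableSet s) {p q u v : ℝ} (hu : 0 < u) (huv : u ≤ v)
    {φ : ℝ → ℝ} (hφm : Measurable φ) (hφl : ∀ x ∈ s, u ≤ φ x) (hφu : ∀ x ∈ s, φ x ≤ v)
    (hx0 : ∀ x ∈ s, 0 ≤ x) :
    IntegrableOn (fun x => φ x ^ q * x ^ p) s ↔ IntegrableOn (fun x => x ^ p) s := by
  have hv : 0 < v := hu.trans_le huv
  have hmf : Measurable fun x : ℝ => φ x ^ q * x ^ p := by fun_prop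
  have hmg : Measurable fun x : ℝ => x ^ p := by fun_prop
  refine integrableOn_iff_of_bounds hs hmf.aestronglyMeasurable hmg.aestronglyMeasurable
    (c := min (u ^ q) (v ^ q)) (C := max (u ^ q) (v ^ q))
    (lt_min (Real.rpow_pos_of_pos hu q) (Real.rpow_pos_of_pos hv q))
    (fun x hx => Real.rpow_nonneg (hx0 x hx) p) (fun x hx => ?_) (fun x hx => ?_)
  · exact mul_le_mul_of_nonneg_right (rpow_bounds' hu (hφl x hx) (hφu x hx)).1
      (Real.rpow_nonneg (hx0 x hx) p)
  · exact mul_le_mul_of_nonneg_right (rpow_bounds' hu (hφl x hx) (hφu x hx)).2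
      (Real.rpow_nonneg (hx0 x hx) p)

/-- comparable-to-`x` factor times `x ^ p` -/
private lemma aux_tail {s : Set ℝ} (hs : MeasurableSet s) {p q k K : ℝ} (hk : 0 < k) (hkK : k ≤ K)
    {φ : ℝ → ℝ} (hφm : Measurable φ) (hφl : ∀ x ∈ s, k * x ≤ φ x) (hφu : ∀ x ∈ s, φ x ≤ K * x)
    (hx0 : ∀ x ∈ s, 0 < x) :
    IntegrableOn (fun x => φ x ^ q * x ^ p) s ↔ IntegrableOn (fun x => x ^ (p + q)) s := by
  have hK : 0 < K := hk.trans_le hkK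
  have hmf : Measurable fun x : ℝ => φ x ^ q * x ^ p := by fun_prop
  have hmg : Measurable fun x : ℝ => x ^ (p + q) := by fun_prop
  refine integrableOn_iff_of_bounds hs hmf.aestronglyMeasurable hmg.aestronglyMeasurable
    (c := min (k ^ q) (K ^ q)) (C := max (k ^ q) (K ^ q))
    (lt_min (Real.rpow_pos_of_pos hk q) (Real.rpow_pos_of_pos hK q))
    (fun x hx => Real.rpow_nonneg (hx0 x hx).le _) (fun x hx => ?_) (fun x hx => ?_)
  · have hx : 0 < x := hx0 x hx
    have hb := rpow_bounds' (u := k * x) (v := K * x) (t := φ x) (p := q)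
      (by positivity) (hφl x ‹_›) (hφu x ‹_›)
    rw [Real.mul_rpow hk.le hx.le, Real.mul_rpow hK.le hx.le,
      ← min_mul_of_nonneg _ _ (Real.rpow_nonneg hx.le q)] at hb
    calc min (k ^ q) (K ^ q) * x ^ (p + q)
        = (min (k ^ q) (K ^ q) * x ^ q) * x ^ p := by
          rw [Real.rpow_add hx]; ring
      _ ≤ φ x ^ q * x ^ p :=
          mul_le_mul_of_nonneg_right hb.1 (Real.rpow_nonneg hx.le p)
  · have hx : 0 < x := hx0 x hx
    have hb := rpow_bounds' (u := k * x) (v := K * x) (t := φ x) (p := q)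
      (by positivity) (hφl x ‹_›) (hφu x ‹_›)
    rw [Real.mul_rpow hk.le hx.le, Real.mul_rpow hK.le hx.le,
      ← max_mul_of_nonneg _ _ (Real.rpow_nonneg hx.le q)] at hb
    calc φ x ^ q * x ^ p
        ≤ (max (k ^ q) (K ^ q) * x ^ q) * x ^ p :=
          mul_le_mul_of_nonneg_right hb.2 (Real.rpow_nonneg hx.le p)
      _ = max (k ^ q) (K ^ q) * x ^ (p + q) := by
          rw [Real.rpow_add hx]; ring

theorem stmt_3 (a b : ℝ) :
    Integrable (fun x : ℝ => |x| ^ a * |1 - x| ^ b) ↔ (-1 < a ∧ -1 < b ∧ a + b < -1) := by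
  set f : ℝ → ℝ := fun x => |x| ^ a * |1 - x| ^ b with hf
  -- decomposition of the line
  have hcover : Iic (-1 : ℝ) ∪ Ioc (-1) 0 ∪ Ioc 0 (1/2) ∪ Ioc (1/2) 1 ∪ Ioc 1 2 ∪ Ioi 2
      = (univ : Set ℝ) := by
    rw [Iic_union_Ioc_eq_Iic (by norm_num : (-1:ℝ) ≤ 0),
      Iic_union_Ioc_eq_Iic (by norm_num : (0:ℝ) ≤ 1/2),
      Iic_union_Ioc_eq_Iic (by norm_num : (1/2:ℝ) ≤ 1),
      Iic_union_Ioc_eq_Iic (by norm_num : (1:ℝ) ≤ 2), Iic_union_Ioi]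
  have hsplit : Integrable f ↔
      IntegrableOn f (Iic (-1)) ∧ IntegrableOn f (Ioc (-1) 0) ∧ IntegrableOn f (Ioc 0 (1/2)) ∧
      IntegrableOn f (Ioc (1/2) 1) ∧ IntegrableOn f (Ioc 1 2) ∧ IntegrableOn f (Ioi 2) := by
    rw [← integrableOn_univ, ← hcover, integrableOn_union, integrableOn_union,
      integrableOn_union, integrableOn_union, integrableOn_union]
    tauto
  -- Piece 1 : (-∞, -1]
  have P1 : IntegrableOn f (Iic (-1)) ↔ a + b < -1 := by
    have he : (Neg.neg : ℝ → ℝ) ⁻¹' (Iic (-1)) = Ici 1 := by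
      ext x; simp [neg_le]
    rw [← (Measure.measurePreserving_neg volume).integrableOn_comp_preimage
      (Homeomorph.neg ℝ).measurableEmbedding, he]
    have hEq : EqOn (f ∘ Neg.neg) (fun x => (1 + x) ^ b * x ^ a) (Ici 1) := by
      intro x hx
      simp only [mem_Ici] at hx
      simp only [Function.comp_apply, hf, abs_neg, sub_neg_eq_add,
        abs_of_nonneg (by linarith : (0:ℝ) ≤ x), abs_of_nonneg (by linarith : (0:ℝ) ≤ 1 + x)]
      ring
    rw [integrableOn_congr_fun hEq measurableSet_Ici,
      aux_tail measurableSet_Ici one_pos (by norm_num : (1:ℝ) ≤ 2) (by fun_prop)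
        (fun x hx => by simp only [mem_Ici] at hx; linarith)
        (fun x hx => by simp only [mem_Ici] at hx; linarith)
        (fun x hx => by simp only [mem_Ici] at hx; linarith)]
    rw [IntegrableOn, Measure.restrict_congr_set Ioi_ae_eq_Ici.symm]
    exact integrableOn_Ioi_rpow_iff one_pos
  -- Piece 2 : (-1, 0]
  have P2 : IntegrableOn f (Ioc (-1) 0) ↔ -1 < a := by
    have he : (Neg.neg : ℝ → ℝ) ⁻¹' (Ioc (-1) 0) = Ico 0 1 := by
      ext x
      simp only [mem_preimage, mem_Ioc, mem_Ico]
      constructor <;> intro h <;> constructor <;> linarith [h.1, h.2]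
    rw [← (Measure.measurePreserving_neg volume).integrableOn_comp_preimage
      (Homeomorph.neg ℝ).measurableEmbedding, he]
    have hEq : EqOn (f ∘ Neg.neg) (fun x => (1 + x) ^ b * x ^ a) (Ico 0 1) := by
      intro x hx
      simp only [mem_Ico] at hx
      simp only [Function.comp_apply, hf, abs_neg, sub_neg_eq_add,
        abs_of_nonneg hx.1, abs_of_nonneg (by linarith [hx.1] : (0:ℝ) ≤ 1 + x)]
      ring
    rw [integrableOn_congr_fun hEq measurableSet_Ico,
      aux_bdd measurableSet_Ico one_pos (by norm_num : (1:ℝ) ≤ 2) (by fun_prop)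
        (fun x hx => by simp only [mem_Ico] at hx; linarith [hx.1])
        (fun x hx => by simp only [mem_Ico] at hx; linarith [hx.2])
        (fun x hx => by simp only [mem_Ico] at hx; exact hx.1)]
    rw [IntegrableOn, Measure.restrict_congr_set Ioo_ae_eq_Ico.symm]
    exact intervalIntegral.integrableOn_Ioo_rpow_iff one_pos
  -- Piece 3 : (0, 1/2]
  have P3 : IntegrableOn f (Ioc 0 (1/2)) ↔ -1 < a := by
    have hEq : EqOn f (fun x => (1 - x) ^ b * x ^ a) (Ioc 0 (1/2)) := by
      intro x hx
      simp only [mem_Ioc] at hx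
      simp only [hf, abs_of_pos hx.1, abs_of_nonneg (by linarith [hx.2] : (0:ℝ) ≤ 1 - x)]
      ring
    rw [integrableOn_congr_fun hEq measurableSet_Ioc,
      aux_bdd measurableSet_Ioc (by norm_num : (0:ℝ) < 1/2) (by norm_num : (1/2:ℝ) ≤ 1)
        (by fun_prop)
        (fun x hx => by simp only [mem_Ioc] at hx; linarith [hx.2])
        (fun x hx => by simp only [mem_Ioc] at hx; linarith [hx.1])
        (fun x hx => by simp only [mem_Ioc] at hx; exact hx.1.le)]
    rw [IntegrableOn, Measure.restrict_congr_set Ioo_ae_eq_Ioc.symm]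
    exact intervalIntegral.integrableOn_Ioo_rpow_iff (by norm_num)
  -- Piece 4 : (1/2, 1]
  have P4 : IntegrableOn f (Ioc (1/2) 1) ↔ -1 < b := by
    have he : (fun x : ℝ => 1 - x) ⁻¹' (Ioc (1/2) 1) = Ico 0 (1/2) := by
      ext x
      simp only [mem_preimage, mem_Ioc, mem_Ico]
      constructor <;> intro h <;> constructor <;> linarith [h.1, h.2]
    rw [← (Measure.measurePreserving_sub_left volume 1).integrableOn_comp_preimage
      (MeasurableEquiv.subLeft 1).measurableEmbedding, he]
    have hEq : EqOn (f ∘ fun x : ℝ => 1 - x) (fun x => (1 - x) ^ a * x ^ b) (Ico 0 (1/2)) := by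
      intro x hx
      simp only [mem_Ico] at hx
      simp only [Function.comp_apply, hf, sub_sub_cancel,
        abs_of_nonneg hx.1, abs_of_nonneg (by linarith [hx.2] : (0:ℝ) ≤ 1 - x)]
    rw [integrableOn_congr_fun hEq measurableSet_Ico,
      aux_bdd measurableSet_Ico (by norm_num : (0:ℝ) < 1/2) (by norm_num : (1/2:ℝ) ≤ 1)
        (by fun_prop)
        (fun x hx => by simp only [mem_Ico] at hx; linarith [hx.2])
        (fun x hx => by simp only [mem_Ico] at hx; linarith [hx.1])
        (fun x hx => by simp only [mem_Ico] at hx; exact hx.1)]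
    rw [IntegrableOn, Measure.restrict_congr_set Ioo_ae_eq_Ico.symm]
    exact intervalIntegral.integrableOn_Ioo_rpow_iff (by norm_num)
  -- Piece 5 : (1, 2]
  have P5 : IntegrableOn f (Ioc 1 2) ↔ -1 < b := by
    have he : (fun x : ℝ => x + 1) ⁻¹' (Ioc 1 2) = Ioc 0 1 := by
      ext x
      simp only [mem_preimage, mem_Ioc]
      constructor <;> intro h <;> constructor <;> linarith [h.1, h.2]
    rw [← (measurePreserving_add_right volume 1).integrableOn_comp_preimage
      (MeasurableEquiv.addRight 1).measurableEmbedding, he]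
    have hEq : EqOn (f ∘ fun x : ℝ => x + 1) (fun x => (x + 1) ^ a * x ^ b) (Ioc 0 1) := by
      intro x hx
      simp only [mem_Ioc] at hx
      have h1 : (1 : ℝ) - (x + 1) = -x := by ring
      simp only [Function.comp_apply, hf, h1, abs_neg,
        abs_of_pos hx.1, abs_of_nonneg (by linarith [hx.1] : (0:ℝ) ≤ x + 1)]
    rw [integrableOn_congr_fun hEq measurableSet_Ioc,
      aux_bdd measurableSet_Ioc one_pos (by norm_num : (1:ℝ) ≤ 2) (by fun_prop)
        (fun x hx => by simp only [mem_Ioc] at hx; linarith [hx.1])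
        (fun x hx => by simp only [mem_Ioc] at hx; linarith [hx.2])
        (fun x hx => by simp only [mem_Ioc] at hx; exact hx.1.le)]
    rw [IntegrableOn, Measure.restrict_congr_set Ioo_ae_eq_Ioc.symm]
    exact intervalIntegral.integrableOn_Ioo_rpow_iff one_pos
  -- Piece 6 : (2, ∞)
  have P6 : IntegrableOn f (Ioi 2) ↔ a + b < -1 := by
    have hEq : EqOn f (fun x => (x - 1) ^ b * x ^ a) (Ioi 2) := by
      intro x hx
      simp only [mem_Ioi] at hx
      rw [hf]
      simp only [abs_of_pos (by linarith : (0:ℝ) < x), abs_sub_comm,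
        abs_of_pos (by linarith : (0:ℝ) < x - 1)]
      ring
    rw [integrableOn_congr_fun hEq measurableSet_Ioi,
      aux_tail measurableSet_Ioi (by norm_num : (0:ℝ) < 1/2) (by norm_num : (1/2:ℝ) ≤ 1)
        (by fun_prop)
        (fun x hx => by simp only [mem_Ioi] at hx; linarith)
        (fun x hx => by simp only [mem_Ioi] at hx; linarith)
        (fun x hx => by simp only [mem_Ioi] at hx; linarith)]
    exact integrableOn_Ioi_rpow_iff (by norm_num)
  rw [hsplit, P1, P2, P3, P4, P5, P6]
  constructor
  · rintro ⟨h1, h2, -, h4, -, -⟩; exact ⟨h2, h4, h1⟩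
  · rintro ⟨h1, h2, h3⟩; exact ⟨h3, h1, h1, h2, h2, h3⟩
end

section
/- Let N, k, ℓ be integers with 0 ≤ ℓ < k ≤ N − 1. Then the inequality C(N+1−k,2)·(−2/(N+1−k)) + (C(N+1−ℓ,2) − C(N+1−k,2)) · (−2/(N+2)) · ((k+1)N + 2k)/(2(k+1)N − k(k−1)) > −(N − ℓ) is equivalent to (kℓ + ℓ + k + 3)N + 2kℓ > 0, and hence always holds. -/
/-!
Writing `c m = m (m - 1) / 2` for the binomial coefficient, the difference between the two sides
of the inequality is a rational function of `N, k, l` which simplifies to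
`(k - l) * ((k l + l + k + 3) N + 2 k l) / ((N + 2) (2 (k + 1) N - k (k - 1)))`.
For `0 ≤ l < k < N` the factor `k - l` and the denominator are positive, so the inequality holds
iff `(k l + l + k + 3) N + 2 k l > 0`, which is clear for nonnegative `k, l` and positive `N`.
-/

theorem Nat.cast_choose_two_sub {K : Type*} [DivisionRing K] [CharZero K] {n m : ℕ} (h : m ≤ n) :
    ((n - m).choose 2 : K) = ((n : K) - m) * ((n : K) - m - 1) / 2 := by
  rw [Nat.cast_choose_two, Nat.cast_sub h]

section Case3

variable {K : Type*} [Field K]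

theorem case3_add_eq [NeZero (2 : K)] (N k l : K) (hNk : N + 1 - k ≠ 0) (hN : N + 2 ≠ 0)
    (hD : 2 * (k + 1) * N - k * (k - 1) ≠ 0) :
    (N + 1 - k) * (N + 1 - k - 1) / 2 * (-2 / (N + 1 - k)) +
        ((N + 1 - l) * (N + 1 - l - 1) / 2 - (N + 1 - k) * (N + 1 - k - 1) / 2) *
          (-2 / (N + 2)) * ((k + 1) * N + 2 * k) / (2 * (k + 1) * N - k * (k - 1)) + (N - l) =
      (k - l) * ((k * l + l + k + 3) * N + 2 * k * l) /
        ((N + 2) * (2 * (k + 1) * N - k * (k - 1))) := by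
  -- `field_simp` only recognises the denominator as nonzero through an atom matching `hD`.
  set D := 2 * (k + 1) * N - k * (k - 1) with hD_def
  field_simp
  rw [hD_def]
  ring

variable [LinearOrder K] [IsStrictOrderedRing K]

theorem case3_denom_pos {N k : K} (hk : 0 ≤ k) (hkN : k ≤ N) (hN : 0 < N) :
    0 < 2 * (k + 1) * N - k * (k - 1) := by
  nlinarith [mul_le_mul_of_nonneg_left hkN hk]

theorem case3_lt_iff {N k l : K} (hl : 0 ≤ l) (hlk : l < k) (hkN : k + 1 ≤ N) :
    -(N - l) < (N + 1 - k) * (N + 1 - k - 1) / 2 * (-2 / (N + 1 - k)) +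
        ((N + 1 - l) * (N + 1 - l - 1) / 2 - (N + 1 - k) * (N + 1 - k - 1) / 2) *
          (-2 / (N + 2)) * ((k + 1) * N + 2 * k) / (2 * (k + 1) * N - k * (k - 1)) ↔
      0 < (k * l + l + k + 3) * N + 2 * k * l := by
  have hN : 0 < N + 2 := by linarith
  have hD : 0 < 2 * (k + 1) * N - k * (k - 1) :=
    case3_denom_pos (by linarith) (by linarith) (by linarith)
  rw [← sub_pos, sub_neg_eq_add, case3_add_eq N k l (by linarith) hN.ne' hD.ne',
    mul_div_assoc, mul_pos_iff_of_pos_left (sub_pos.mpr hlk), div_pos_iff_of_pos_right (by positivity)]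

theorem case3_poly_pos {N k l : K} (hl : 0 ≤ l) (hk : 0 ≤ k) (hN : 0 < N) :
    0 < (k * l + l + k + 3) * N + 2 * k * l := by
  positivity

end Case3

theorem stmt_8_general (N k l : ℕ) (hl : l < k) (hk : k ≤ N - 1) :
    ((((N + 1 - k).choose 2 : ℚ) * (-2 / ((N : ℚ) + 1 - k)) +
        (((N + 1 - l).choose 2 : ℚ) - ((N + 1 - k).choose 2 : ℚ)) * (-2 / ((N : ℚ) + 2)) *
          (((k : ℚ) + 1) * N + 2 * k) / (2 * ((k : ℚ) + 1) * N - k * (k - 1))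
        > -((N : ℚ) - l))
      ↔ ((k : ℚ) * l + l + k + 3) * N + 2 * k * l > 0) ∧
    (((N + 1 - k).choose 2 : ℚ) * (-2 / ((N : ℚ) + 1 - k)) +
        (((N + 1 - l).choose 2 : ℚ) - ((N + 1 - k).choose 2 : ℚ)) * (-2 / ((N : ℚ) + 2)) *
          (((k : ℚ) + 1) * N + 2 * k) / (2 * ((k : ℚ) + 1) * N - k * (k - 1))
        > -((N : ℚ) - l)) := by
  have hkN : (k : ℚ) + 1 ≤ N := by exact_mod_cast (by omega : k + 1 ≤ N)
  rw [Nat.cast_choose_two_sub (by omega : k ≤ N + 1), Nat.cast_choose_two_sub (by omega : l ≤ N + 1)]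
  push_cast
  have hiff := case3_lt_iff (Nat.cast_nonneg l) (Nat.cast_lt.mpr hl) hkN
  have hpoly : 0 < ((k : ℚ) * l + l + k + 3) * N + 2 * k * l :=
    case3_poly_pos (Nat.cast_nonneg l) (Nat.cast_nonneg k) (by linarith)
  exact ⟨hiff, hiff.mpr hpoly⟩

theorem stmt_8 (N k l : ℕ) (hl : l < k) (hk : k ≤ N - 1) (hN : 1 ≤ N) :
    ((((N + 1 - k).choose 2 : ℚ) * (-2 / ((N : ℚ) + 1 - k)) +
        (((N + 1 - l).choose 2 : ℚ) - ((N + 1 - k).choose 2 : ℚ)) * (-2 / ((N : ℚ) + 2)) *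
          (((k : ℚ) + 1) * N + 2 * k) / (2 * ((k : ℚ) + 1) * N - k * (k - 1))
        > -((N : ℚ) - l))
      ↔ ((k : ℚ) * l + l + k + 3) * N + 2 * k * l > 0) ∧
    (((N + 1 - k).choose 2 : ℚ) * (-2 / ((N : ℚ) + 1 - k)) +
        (((N + 1 - l).choose 2 : ℚ) - ((N + 1 - k).choose 2 : ℚ)) * (-2 / ((N : ℚ) + 2)) *
          (((k : ℚ) + 1) * N + 2 * k) / (2 * ((k : ℚ) + 1) * N - k * (k - 1))
        > -((N : ℚ) - l)) :=
  stmt_8_general N k l hl hk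
end

section
/- For every real γ > −1/2 (or any complex γ with Re(γ) > −1/2), the Mehta integral for N = 2 satisfies (1/(2π)) ∫_ℝ ∫_ℝ e^{−(t_1² + t_2²)/2} |t_1 − t_2|^{2γ} dt_1 dt_2 = Γ(1 + 2γ)/Γ(1 + γ) · Γ(1 + γ)/Γ(1 + γ) = Γ(1 + 2γ)/Γ(1 + γ). -/
open MeasureTheory Real

/-- The shear map `(s, w) ↦ (s, w - s/2)` preserves volume. -/
lemma mp_shear1 : MeasurePreserving (fun p : ℝ × ℝ => (p.1, p.2 - p.1 / 2))
    ((volume : Measure ℝ).prod volume) ((volume : Measure ℝ).prod volume) := by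
  refine (MeasurePreserving.id _).skew_product (g := fun a c => c - a / 2) (by fun_prop) ?_
  refine Filter.Eventually.of_forall fun a => ?_
  simp_rw [sub_eq_add_neg]
  exact map_add_right_eq_self volume _

/-- The shear map `(s, w) ↦ (s + w, w)` preserves volume. -/
lemma mp_shear2 : MeasurePreserving (fun p : ℝ × ℝ => (p.1 + p.2, p.2))
    ((volume : Measure ℝ).prod volume) ((volume : Measure ℝ).prod volume) := by
  have h : MeasurePreserving (fun p : ℝ × ℝ => (p.1, p.2 + p.1))
      ((volume : Measure ℝ).prod volume) ((volume : Measure ℝ).prod volume) := by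
    refine (MeasurePreserving.id _).skew_product (g := fun a c => c + a) (by fun_prop) ?_
    exact Filter.Eventually.of_forall fun a => map_add_right_eq_self volume _
  have h2 := (Measure.measurePreserving_swap.comp h).comp
    (Measure.measurePreserving_swap (μ := (volume : Measure ℝ)) (ν := volume))
  exact h2

/-- The rotation-like map as a measurable equiv. -/
noncomputable def rotEquiv : (ℝ × ℝ) ≃ᵐ (ℝ × ℝ) where
  toFun := fun p => (p.1 + (p.2 - p.1 / 2), p.2 - p.1 / 2)
  invFun := fun t => (t.1 - t.2, (t.1 + t.2) / 2)
  left_inv := fun p => by ext <;> simp <;> ring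
  right_inv := fun t => by ext <;> simp <;> ring
  measurable_toFun := by
    show Measurable fun p : ℝ × ℝ => (p.1 + (p.2 - p.1 / 2), p.2 - p.1 / 2)
    fun_prop
  measurable_invFun := by
    show Measurable fun t : ℝ × ℝ => (t.1 - t.2, (t.1 + t.2) / 2)
    fun_prop

lemma mp_rot : MeasurePreserving (rotEquiv : ℝ × ℝ → ℝ × ℝ) volume volume := by
  rw [Measure.volume_eq_prod]
  exact mp_shear2.comp mp_shear1

/-- `∫ |x|^(2γ) e^{-x²/4} dx = 2^(2γ+1) Γ(γ+1/2)`. -/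
lemma integral_abs_rpow_exp (γ : ℝ) (hγ : -1/2 < γ) :
    ∫ x : ℝ, |x| ^ (2 * γ) * Real.exp (-x ^ 2 / 4)
      = 2 ^ (2 * γ + 1) * Real.Gamma (γ + 1/2) := by
  have h1 : ∀ x : ℝ, |x| ^ (2 * γ) * Real.exp (-x ^ 2 / 4)
      = (fun y : ℝ => y ^ (2 * γ) * Real.exp (-(1/4 : ℝ) * y ^ (2 : ℝ))) |x| := by
    intro x
    simp only [rpow_two, sq_abs]
    ring_nf
  simp_rw [h1]
  rw [integral_comp_abs (f := fun y : ℝ => y ^ (2 * γ) * Real.exp (-(1/4 : ℝ) * y ^ (2 : ℝ)))]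
  rw [integral_rpow_mul_exp_neg_mul_rpow two_pos (by linarith) (by norm_num : (0:ℝ) < 1/4)]
  have h4 : ((1:ℝ)/4) = (2:ℝ) ^ (-2 : ℝ) := by
    rw [rpow_neg two_pos.le, rpow_two]; norm_num
  have h2 : ((1 : ℝ)/4) ^ (-(2 * γ + 1) / 2) = 2 ^ (2 * γ + 1) := by
    rw [h4, ← rpow_mul two_pos.le]
    congr 1
    ring
  rw [h2, show (2 * γ + 1) / 2 = γ + 1/2 by ring]
  ring

theorem stmt_19 (γ : ℝ) (hγ : -1/2 < γ) :
    (1 / (2 * π)) *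
        ∫ t : ℝ × ℝ, Real.exp (-(t.1 ^ 2 + t.2 ^ 2) / 2) * |t.1 - t.2| ^ (2 * γ)
      = Real.Gamma (1 + 2 * γ) / Real.Gamma (1 + γ) := by
  set F : ℝ × ℝ → ℝ := fun t => Real.exp (-(t.1 ^ 2 + t.2 ^ 2) / 2) * |t.1 - t.2| ^ (2 * γ)
    with hF
  have key : ∫ t : ℝ × ℝ, F t
      = (∫ s : ℝ, |s| ^ (2 * γ) * Real.exp (-s ^ 2 / 4)) * ∫ w : ℝ, Real.exp (-w ^ 2) := by
    rw [← mp_rot.integral_comp rotEquiv.measurableEmbedding F]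
    have heq : ∀ p : ℝ × ℝ, F (rotEquiv p)
        = (|p.1| ^ (2 * γ) * Real.exp (-p.1 ^ 2 / 4)) * Real.exp (-p.2 ^ 2) := by
      intro p
      show Real.exp (-((p.1 + (p.2 - p.1/2)) ^ 2 + (p.2 - p.1/2) ^ 2) / 2)
          * |(p.1 + (p.2 - p.1/2)) - (p.2 - p.1/2)| ^ (2 * γ)
        = (|p.1| ^ (2 * γ) * Real.exp (-p.1 ^ 2 / 4)) * Real.exp (-p.2 ^ 2)
      rw [show -((p.1 + (p.2 - p.1/2)) ^ 2 + (p.2 - p.1/2) ^ 2) / 2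
            = -p.1 ^ 2 / 4 + -p.2 ^ 2 by ring,
        Real.exp_add, show (p.1 + (p.2 - p.1/2)) - (p.2 - p.1/2) = p.1 by ring]
      ring
    simp_rw [heq]
    rw [Measure.volume_eq_prod]
    exact integral_prod_mul (fun s : ℝ => |s| ^ (2 * γ) * Real.exp (-s ^ 2 / 4))
      (fun w : ℝ => Real.exp (-w ^ 2))
  have hGauss : ∫ w : ℝ, Real.exp (-w ^ 2) = Real.sqrt π := by
    simpa using integral_gaussian 1
  rw [key, integral_abs_rpow_exp γ hγ, hGauss]
  have hdup := Real.Gamma_mul_Gamma_add_half (γ + 1/2)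
  rw [show 2 * (γ + 1/2) = 2 * γ + 1 by ring, show γ + 1/2 + 1/2 = 1 + γ by ring,
    show 1 - (2 * γ + 1) = -(2 * γ) by ring] at hdup
  have hΓpos : 0 < Real.Gamma (1 + γ) := Real.Gamma_pos_of_pos (by linarith)
  have hπ : (0:ℝ) < π := Real.pi_pos
  have h2γ : ((2:ℝ) ^ (-(2*γ)) : ℝ) * 2 ^ (2 * γ + 1) = 2 := by
    rw [← rpow_add two_pos]; norm_num
  have hsq : Real.sqrt π * Real.sqrt π = π := Real.mul_self_sqrt hπ.le
  rw [show (1:ℝ) + 2*γ = 2*γ + 1 by ring, eq_div_iff hΓpos.ne']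
  have expand : (1 / (2*π)) * (2 ^ (2*γ+1) * Real.Gamma (γ+1/2) * √π) * Real.Gamma (1+γ)
      = (Real.Gamma (γ+1/2) * Real.Gamma (1+γ)) * (2 ^ (2*γ+1) * √π) / (2*π) := by ring
  rw [expand, hdup, div_eq_iff (by positivity : (2*π : ℝ) ≠ 0),
    show Real.Gamma (2*γ+1) * 2 ^ (-(2*γ)) * √π * (2 ^ (2*γ+1) * √π)
      = Real.Gamma (2*γ+1) * ((2:ℝ) ^ (-(2*γ)) * 2 ^ (2*γ+1)) * (√π * √π) by ring,
    h2γ, hsq]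
  ring
end
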